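/- Let X be a topological space with a continuous Z/2-action, and let x0 ∈ X be a fixed point of the action. Let ΩX denote the space of paths f : [-π, π] → X with f(-π) = f(π) = x0, equipped with the Z/2-action (g·f)(t) = g·f(-t). Then for every D ≥ 0 there is a bijection (an isomorphism of groups for D ≥ 1) π_D((ΩX)^{Z/2}, c_{x0}) ≅ π_{D+1}(X, X^{Z/2}, x0), where c_{x0} is the constant loop at x0 and X^{Z/2} is the fixed-point subspace. -/

import Mathlib

open scoped Real
noncomputable section

/-- The cube `[-π, π]^n`. -/
def cubeSet (n : ℕ) : Set (Fin n → ℝ) := Set.univ.pi fun _ => Set.Icc (-π) π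

/-- The cube `[-π, π]^n` as a topological space. -/
abbrev Cube (n : ℕ) : Type := ↥(cubeSet n)

instance (n : ℕ) : CompactSpace (Cube n) :=
  isCompact_iff_compactSpace.mp (isCompact_univ_pi fun _ => isCompact_Icc)

/-- Negation `k ↦ -k` on the cube. -/
def Cube.neg {n : ℕ} (k : Cube n) : Cube n :=
  ⟨-k.1, fun i _ => by
    have h := k.2 i (Set.mem_univ i)
    simp only [Set.mem_Icc, Pi.neg_apply] at h ⊢
    constructor <;> linarith [h.1, h.2]⟩

lemma Cube.continuous_neg {n : ℕ} : Continuous (Cube.neg (n := n)) :=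
  (continuous_subtype_val.neg).subtype_mk _

/-- A point of the cube lies on its boundary `∂I^n`. -/
def Cube.onBdry {n : ℕ} (k : Cube n) : Prop := ∃ i, |k.1 i| = π

/-- The subset `J^n = ∂I^n × I ∪ I^n × {π} ⊆ ∂I^{n+1}` (all of the boundary except the
open face where the last coordinate equals `-π`). -/
def Cube.onJ {n : ℕ} (k : Cube (n + 1)) : Prop :=
  (∃ i : Fin n, |k.1 i.castSucc| = π) ∨ k.1 (Fin.last n) = π

/-- The underlying set of the `d`-fold iterated based loop space: continuous maps
`I^d → X` sending `∂I^d` to the base point. -/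
def loopSet (X : Type) [TopologicalSpace X] (x0 : X) (d : ℕ) : Set C(Cube d, X) :=
  {f | ∀ k, Cube.onBdry k → f k = x0}

/-- The `d`-fold iterated based loop space `Ω^d X`. -/
abbrev LoopSp (X : Type) [TopologicalSpace X] (x0 : X) (d : ℕ) : Type := ↥(loopSet X x0 d)

/-- The constant loop, base point of `Ω^d X`. -/
def constLoop (X : Type) [TopologicalSpace X] (x0 : X) (d : ℕ) : LoopSp X x0 d :=
  ⟨ContinuousMap.const _ x0, fun _ _ => rfl⟩

/-- The set of `ℤ/2`-equivariant loops: elements `f` of `Ω^d X` satisfying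
`g (f (-k)) = f k`, i.e. the fixed points of the action `(g·f)(k) = g (f (-k))`. -/
def fixLoopSet (X : Type) [TopologicalSpace X] (g : X → X) (x0 : X) (d : ℕ) :
    Set C(Cube d, X) :=
  {f | (∀ k, Cube.onBdry k → f k = x0) ∧ ∀ k, g (f k.neg) = f k}

/-- The fixed-point space `(Ω^d X)^{ℤ/2}` of the loop space under the involution
`(g·f)(k) = g (f (-k))`. -/
abbrev FixLoopSp (X : Type) [TopologicalSpace X] (g : X → X) (x0 : X) (d : ℕ) : Type :=
  ↥(fixLoopSet X g x0 d)

/-- The constant loop as a point of `(Ω^d X)^{ℤ/2}`. -/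
def constFixLoop (X : Type) [TopologicalSpace X] (g : X → X) (x0 : X) (hx0 : g x0 = x0)
    (d : ℕ) : FixLoopSp X g x0 d :=
  ⟨ContinuousMap.const _ x0, fun _ _ => rfl, fun _ => hx0⟩

/-- A map of triples `(I^{n+1}, ∂I^{n+1}, J^n) → (Y, B, y0)`, representing an element
of the relative homotopy group `π_{n+1}(Y, B, y0)`. -/
structure RelMap (Y : Type) [TopologicalSpace Y] (B : Set Y) (y0 : Y) (n : ℕ) where
  toFun : C(Cube (n + 1), Y)
  mem_bdry : ∀ k, Cube.onBdry k → toFun k ∈ B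
  eq_on_J : ∀ k, Cube.onJ k → toFun k = y0

/-- Homotopy of maps of triples `(I^{n+1}, ∂I^{n+1}, J^n) → (Y, B, y0)`. -/
def RelHomotopic {Y : Type} [TopologicalSpace Y] {B : Set Y} {y0 : Y} {n : ℕ}
    (F G : RelMap Y B y0 n) : Prop :=
  ∃ H : C(unitInterval × Cube (n + 1), Y),
    (∀ k, H (0, k) = F.toFun k) ∧ (∀ k, H (1, k) = G.toFun k) ∧
    (∀ t k, Cube.onBdry k → H (t, k) ∈ B) ∧
    (∀ t k, Cube.onJ k → H (t, k) = y0)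

/-- The relative homotopy group (pointed set) `π_{n+1}(Y, B, y0)`. -/
def RelPi (Y : Type) [TopologicalSpace Y] (B : Set Y) (y0 : Y) (n : ℕ) : Type :=
  Quot (RelHomotopic (Y := Y) (B := B) (y0 := y0) (n := n))

/-- Based homotopy of based maps `(I^d, ∂I^d) → (A, a0)`. -/
def basedHomotopic {A : Type} [TopologicalSpace A] {a0 : A} {d : ℕ}
    (f g : LoopSp A a0 d) : Prop :=
  ∃ H : C(unitInterval × Cube d, A),
    (∀ k, H (0, k) = f.1 k) ∧ (∀ k, H (1, k) = g.1 k) ∧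
    ∀ t k, Cube.onBdry k → H (t, k) = a0

/-- The homotopy group (pointed set) `π_d(A, a0)` modeled on cube maps. -/
def PiSet (A : Type) [TopologicalSpace A] (a0 : A) (d : ℕ) : Type :=
  Quot (basedHomotopic (A := A) (a0 := a0) (d := d))

/-! An equivariant loop `f`, i.e. one with `f (-t) = g (f t)`, is determined by its half on
`[-π, 0]`, a path from `x0` to the fixed point `f 0`; conversely such a half path `h` extends
uniquely to an equivariant loop by `t ↦ g (h (-t))` on `[0, π]`. Reading the half-loop parameter
as the last coordinate of a cube turns an `I^D`-family of equivariant loops, constant on `∂I^D`,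
into a map `(I^(D+1), ∂I^(D+1), J^D) → (X, X^g, x0)`, and back. Both constructions work for
families over any parameter space, so applying them over `I × I^D` carries homotopies along. -/

open scoped unitInterval

/-- Mathlib's homotopy groups use cubes `I^N`; the relative ones here use `[-π, π]^(n+1)`. -/
def cubeCoordHomeo : Set.Icc (-π) π ≃ₜ I := iccHomeoI (-π) π (by linarith [Real.pi_pos])

lemma abs_cubeCoordHomeo_symm_eq_pi_iff (y : I) :
    |((cubeCoordHomeo.symm y : Set.Icc (-π) π) : ℝ)| = π ↔ y = 0 ∨ y = 1 := by
  have hπ := Real.pi_pos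
  simp only [cubeCoordHomeo, iccHomeoI_symm_apply_coe, abs_eq hπ.le, Subtype.ext_iff,
    Set.Icc.coe_zero, Set.Icc.coe_one]
  constructor
  · rintro (h | h)
    · right; nlinarith
    · left; nlinarith
  · rintro (h | h) <;> rw [h] <;> [right; left] <;> ring

namespace Cube

variable {n : ℕ}

def init (k : Cube (n + 1)) : Fin n → I :=
  fun i => cubeCoordHomeo ⟨k.1 i.castSucc, k.2 _ (Set.mem_univ _)⟩

def snoc (s : Fin n → I) (u : Set.Icc (-π) π) : Cube (n + 1) :=
  ⟨Fin.snoc (fun i => (cubeCoordHomeo.symm (s i) : ℝ)) u, fun j _ => by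
    refine Fin.lastCases ?_ (fun i => ?_) j
    · simp [u.2]
    · simp [(cubeCoordHomeo.symm (s i)).2]⟩

lemma last_mem (k : Cube (n + 1)) : k.1 (Fin.last n) ∈ Set.Icc (-π) π :=
  k.2 _ (Set.mem_univ _)

@[simp]
lemma snoc_castSucc (s : Fin n → I) (u : Set.Icc (-π) π) (i : Fin n) :
    (snoc s u).1 i.castSucc = cubeCoordHomeo.symm (s i) := by
  simp [snoc]

@[simp]
lemma snoc_last (s : Fin n → I) (u : Set.Icc (-π) π) : (snoc s u).1 (Fin.last n) = u := by
  simp [snoc]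

@[simp]
lemma init_snoc (s : Fin n → I) (u : Set.Icc (-π) π) : init (snoc s u) = s := by
  funext i
  simp only [init, snoc_castSucc, Subtype.coe_eta, Homeomorph.apply_symm_apply]

lemma snoc_init (k : Cube (n + 1)) : snoc (init k) ⟨_, last_mem k⟩ = k := by
  refine Subtype.ext (funext fun j => Fin.lastCases ?_ (fun i => ?_) j)
  · simp
  · simp [init]

@[fun_prop]
lemma continuous_init : Continuous (init (n := n)) :=
  continuous_pi fun _ => cubeCoordHomeo.continuous.comp <|
    ((continuous_apply _).comp continuous_subtype_val).subtype_mk _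

lemma _root_.Continuous.cube_snoc {Z : Type*} [TopologicalSpace Z] {s : Z → Fin n → I}
    {u : Z → Set.Icc (-π) π} (hs : Continuous s) (hu : Continuous u) :
    Continuous fun z => snoc (s z) (u z) := by
  refine Continuous.subtype_mk (continuous_pi fun j => Fin.lastCases ?_ (fun i => ?_) j) _
  · simpa [snoc] using hu.subtype_val
  · simpa [snoc] using
      (cubeCoordHomeo.symm.continuous.comp ((continuous_apply i).comp hs)).subtype_val

lemma init_mem_boundary {k : Cube (n + 1)} (hk : ∃ i : Fin n, |k.1 i.castSucc| = π) :
    init k ∈ Cube.boundary (Fin n) := by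
  obtain ⟨i, hi⟩ := hk
  refine ⟨i, (abs_cubeCoordHomeo_symm_eq_pi_iff _).1 ?_⟩
  simpa [init] using hi

lemma onJ_snoc_of_mem_boundary {s : Fin n → I} (hs : s ∈ Cube.boundary (Fin n))
    (u : Set.Icc (-π) π) : onJ (snoc s u) := by
  obtain ⟨i, hi⟩ := hs
  exact Or.inl ⟨i, by simpa using (abs_cubeCoordHomeo_symm_eq_pi_iff _).2 hi⟩

lemma onJ_or_last_eq_neg_pi_of_onBdry {k : Cube (n + 1)} (hk : onBdry k) :
    onJ k ∨ k.1 (Fin.last n) = -π := by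
  obtain ⟨i, hi⟩ := hk
  rcases Fin.eq_castSucc_or_eq_last i with ⟨j, rfl⟩ | rfl
  · exact Or.inl (Or.inl ⟨j, hi⟩)
  · rcases (abs_eq Real.pi_pos.le).1 hi with h | h
    · exact Or.inl (Or.inr h)
    · exact Or.inr h

lemma onBdry_of_last_eq_neg_pi {k : Cube (n + 1)} (hk : k.1 (Fin.last n) = -π) : onBdry k :=
  ⟨Fin.last n, by rw [hk, abs_neg, abs_of_pos Real.pi_pos]⟩

lemma ext_one {a b : Cube 1} (h : a.1 0 = b.1 0) : a = b :=
  Subtype.ext (funext fun i => Subsingleton.elim i 0 ▸ h)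

/-- Reparametrizes the last coordinate `[-π, π]` of `Cube (n + 1)` onto the half-loop
parameter range `[-π, 0]`, sending `π` to `-π` and `-π` to `0`. -/
def halfParam (k : Cube (n + 1)) : Cube 1 :=
  ⟨fun _ => -(k.1 (Fin.last n) + π) / 2, fun _ _ => by
    have := last_mem k
    constructor <;> linarith [this.1, this.2]⟩

/-- The inverse of `halfParam` on `[-π, 0]`, extended evenly to `[-π, π]`. -/
def foldParam (t : Cube 1) : Set.Icc (-π) π :=
  ⟨2 * |t.1 0| - π, by
    have h := abs_le.2 (t.2 0 (Set.mem_univ _))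
    constructor <;> linarith [abs_nonneg (t.1 0)]⟩

@[fun_prop]
lemma continuous_halfParam : Continuous (halfParam (n := n)) :=
  Continuous.subtype_mk (continuous_pi fun _ =>
    ((((continuous_apply _).comp continuous_subtype_val).add continuous_const).neg.div_const 2)) _

@[fun_prop]
lemma continuous_foldParam : Continuous foldParam :=
  Continuous.subtype_mk
    ((continuous_const.mul ((continuous_apply 0).comp continuous_subtype_val).abs).sub
      continuous_const) _

lemma halfParam_val (k : Cube (n + 1)) : (halfParam k).1 0 = -(k.1 (Fin.last n) + π) / 2 := rfl

lemma halfParam_nonpos (k : Cube (n + 1)) : (halfParam k).1 0 ≤ 0 := by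
  rw [halfParam_val]; linarith [(last_mem k).1]

@[simp]
lemma foldParam_val (t : Cube 1) : (foldParam t : ℝ) = 2 * |t.1 0| - π := rfl

lemma foldParam_neg (t : Cube 1) : foldParam t.neg = foldParam t := by
  ext; simp [Cube.neg]

lemma foldParam_halfParam (k : Cube (n + 1)) :
    foldParam (halfParam k) = ⟨_, last_mem k⟩ := by
  ext
  rw [foldParam_val, abs_of_nonpos (halfParam_nonpos k), halfParam_val]
  ring

lemma halfParam_snoc_foldParam (s : Fin n → I) (t : Cube 1) :
    halfParam (snoc s (foldParam t)) = if t.1 0 ≤ 0 then t else t.neg := by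
  split_ifs with h <;> refine ext_one ?_
  · simp [halfParam_val, abs_of_nonpos h]
  · simp [halfParam_val, Cube.neg, abs_of_pos (not_le.1 h)]
    ring

lemma foldParam_eq_pi_of_onBdry {t : Cube 1} (ht : onBdry t) : (foldParam t : ℝ) = π := by
  obtain ⟨i, hi⟩ := ht
  rw [Subsingleton.elim i 0] at hi
  rw [foldParam_val, hi]; ring

lemma foldParam_eq_neg_pi_of_eq_zero {t : Cube 1} (ht : t.1 0 = 0) :
    (foldParam t : ℝ) = -π := by
  rw [foldParam_val, ht]; simp

lemma onBdry_halfParam_of_last_eq_pi {k : Cube (n + 1)} (hk : k.1 (Fin.last n) = π) :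
    onBdry (halfParam k) :=
  ⟨0, by rw [halfParam_val, hk, show -(π + π) / 2 = -π by ring, abs_neg,
    abs_of_pos Real.pi_pos]⟩

lemma neg_halfParam_of_last_eq_neg_pi {k : Cube (n + 1)} (hk : k.1 (Fin.last n) = -π) :
    (halfParam k).neg = halfParam k :=
  ext_one (by simp [Cube.neg, halfParam_val, hk])

end Cube

lemma GenLoop.homotopic_iff_exists_family {N Y : Type*} [TopologicalSpace Y] {y : Y}
    {p q : GenLoop N Y y} :
    GenLoop.Homotopic p q ↔
      ∃ r : I → GenLoop N Y y, Continuous (fun w : I × (N → I) => r w.1 w.2) ∧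
        r 0 = p ∧ r 1 = q := by
  constructor
  · rintro ⟨H⟩
    refine ⟨fun τ => ⟨H.toHomotopy.curry τ, fun z hz => ?_⟩, H.continuous, ?_, ?_⟩
    · simp [H.eq_fst τ hz, GenLoop.boundary p z hz]
    · exact GenLoop.ext _ _ fun z => H.apply_zero z
    · exact GenLoop.ext _ _ fun z => H.apply_one z
  · rintro ⟨r, hr, rfl, rfl⟩
    exact ⟨{ toFun := fun w => r w.1 w.2
             continuous_toFun := hr
             map_zero_left := fun _ => rfl
             map_one_left := fun _ => rfl
             prop' := fun τ z hz => by
               simp [GenLoop.boundary _ z hz] }⟩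

lemma RelMap.ext {Y : Type} [TopologicalSpace Y] {B : Set Y} {y0 : Y} {n : ℕ}
    {F G : RelMap Y B y0 n} (h : ∀ k, F.toFun k = G.toFun k) : F = G := by
  cases F; cases G
  congr
  exact ContinuousMap.ext h

lemma relHomotopic_iff_exists_family {Y : Type} [TopologicalSpace Y] {B : Set Y} {y0 : Y}
    {n : ℕ} {F G : RelMap Y B y0 n} :
    RelHomotopic F G ↔
      ∃ r : I → RelMap Y B y0 n, Continuous (fun w : I × Cube (n + 1) => (r w.1).toFun w.2) ∧
        r 0 = F ∧ r 1 = G := by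
  constructor
  · rintro ⟨H, h0, h1, hB, hJ⟩
    refine ⟨fun τ => ⟨H.curry τ, hB τ, hJ τ⟩, H.continuous, ?_, ?_⟩
    · exact RelMap.ext h0
    · exact RelMap.ext h1
  · rintro ⟨r, hr, rfl, rfl⟩
    exact ⟨⟨_, hr⟩, fun _ => rfl, fun _ => rfl, fun τ => (r τ).mem_bdry,
      fun τ => (r τ).eq_on_J⟩

namespace EquivariantLoop

open Cube

variable {X : Type} [TopologicalSpace X] {g : X → X} {x0 : X} {n : ℕ}

section ToRelMap

variable (hx0 : g x0 = x0)

lemma eval_halfParam_eq_of_onJ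
    (p : GenLoop (Fin n) (FixLoopSp X g x0 1) (constFixLoop X g x0 hx0 1))
    {k : Cube (n + 1)} (hk : onJ k) : (p (init k)).1 (halfParam k) = x0 := by
  rcases hk with h | h
  · rw [GenLoop.boundary p _ (init_mem_boundary h)]
    rfl
  · exact (p (init k)).2.1 _ (onBdry_halfParam_of_last_eq_pi h)

lemma eval_halfParam_fixed_of_onBdry
    (p : GenLoop (Fin n) (FixLoopSp X g x0 1) (constFixLoop X g x0 hx0 1))
    {k : Cube (n + 1)} (hk : onBdry k) :
    g ((p (init k)).1 (halfParam k)) = (p (init k)).1 (halfParam k) := by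
  rcases onJ_or_last_eq_neg_pi_of_onBdry hk with h | h
  · rw [eval_halfParam_eq_of_onJ hx0 p h, hx0]
  · conv_lhs => rw [← neg_halfParam_of_last_eq_neg_pi h]
    exact (p (init k)).2.2 _

def toRelMap (p : GenLoop (Fin n) (FixLoopSp X g x0 1) (constFixLoop X g x0 hx0 1)) :
    RelMap X {x | g x = x} x0 n where
  toFun := ⟨fun k => (p (init k)).1 (halfParam k), by fun_prop⟩
  mem_bdry _ := eval_halfParam_fixed_of_onBdry hx0 p
  eq_on_J _ := eval_halfParam_eq_of_onJ hx0 p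

end ToRelMap

section OfRelMap

def foldMap (g : X → X) (F : Cube (n + 1) → X) (s : Fin n → I) (t : Cube 1) : X :=
  if t.1 0 ≤ 0 then F (snoc s (foldParam t)) else g (F (snoc s (foldParam t)))

lemma continuous_foldMap {Z : Type*} [TopologicalSpace Z] (hg : Continuous g)
    {F : Z → Cube (n + 1) → X} (hF : Continuous (Function.uncurry F))
    (hfix : ∀ z k, k.1 (Fin.last n) = -π → g (F z k) = F z k)
    {s : Z → Fin n → I} (hs : Continuous s) {t : Z → Cube 1} (ht : Continuous t) :
    Continuous fun z => foldMap g (F z) (s z) (t z) := by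
  have hpt : Continuous fun z => F z (snoc (s z) (foldParam (t z))) :=
    hF.comp (continuous_id.prodMk (hs.cube_snoc (continuous_foldParam.comp ht)))
  refine Continuous.if_le hpt (hg.comp hpt) ((continuous_apply 0).comp ht.subtype_val)
    continuous_const fun z hz => (hfix z _ ?_).symm
  rw [snoc_last, foldParam_eq_neg_pi_of_eq_zero hz]

variable (F : RelMap X {x | g x = x} x0 n)

lemma foldMap_eq_of_onBdry (hx0 : g x0 = x0) (s : Fin n → I) {t : Cube 1} (ht : onBdry t) :
    foldMap g F.toFun s t = x0 := by
  have h : F.toFun (snoc s (foldParam t)) = x0 :=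
    F.eq_on_J _ (Or.inr (by rw [snoc_last, foldParam_eq_pi_of_onBdry ht]))
  unfold foldMap
  split_ifs <;> simp [h, hx0]

lemma foldMap_eq_of_mem_boundary (hx0 : g x0 = x0) {s : Fin n → I}
    (hs : s ∈ Cube.boundary (Fin n)) (t : Cube 1) : foldMap g F.toFun s t = x0 := by
  have h : F.toFun (snoc s (foldParam t)) = x0 := F.eq_on_J _ (onJ_snoc_of_mem_boundary hs _)
  unfold foldMap
  split_ifs <;> simp [h, hx0]

lemma foldMap_neg (hinv : Function.Involutive g) (s : Fin n → I) (t : Cube 1) :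
    g (foldMap g F.toFun s t.neg) = foldMap g F.toFun s t := by
  have hneg : t.neg.1 0 = -t.1 0 := rfl
  unfold foldMap
  rw [foldParam_neg, hneg]
  split_ifs with h₁ h₂ h₂
  · have ht : t.1 0 = 0 := by linarith
    exact F.mem_bdry _
      (onBdry_of_last_eq_neg_pi (by rw [snoc_last, foldParam_eq_neg_pi_of_eq_zero ht]))
  · rfl
  · exact hinv _
  · exact absurd (by linarith) h₂

variable (hg : Continuous g) (hinv : Function.Involutive g) (hx0 : g x0 = x0)

def foldLoop (s : Fin n → I) : FixLoopSp X g x0 1 :=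
  ⟨⟨foldMap g F.toFun s, continuous_foldMap hg (F := fun _ => F.toFun)
      (F.toFun.continuous.comp continuous_snd)
      (fun _ _ hk => F.mem_bdry _ (onBdry_of_last_eq_neg_pi hk))
      continuous_const continuous_id⟩,
    fun _ => foldMap_eq_of_onBdry F hx0 s, foldMap_neg F hinv s⟩

variable {F} in
lemma continuous_foldLoop {Z : Type*} [TopologicalSpace Z] {r : Z → RelMap X {x | g x = x} x0 n}
    (hr : Continuous fun w : Z × Cube (n + 1) => (r w.1).toFun w.2)
    {s : Z → Fin n → I} (hs : Continuous s) :
    Continuous fun z => foldLoop (r z) hg hinv hx0 (s z) :=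
  Continuous.subtype_mk (ContinuousMap.continuous_of_continuous_uncurry _ <|
    continuous_foldMap hg (F := fun w : Z × Cube 1 => (r w.1).toFun)
      (hr.comp (continuous_fst.fst.prodMk continuous_snd))
      (fun w _ hk => (r w.1).mem_bdry _ (onBdry_of_last_eq_neg_pi hk))
      (hs.comp continuous_fst) continuous_snd) _

def ofRelMap : GenLoop (Fin n) (FixLoopSp X g x0 1) (constFixLoop X g x0 hx0 1) :=
  ⟨⟨foldLoop F hg hinv hx0,
      continuous_foldLoop hg hinv hx0 (F.toFun.continuous.comp continuous_snd) continuous_id⟩,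
    fun _ hs => Subtype.ext (ContinuousMap.ext (foldMap_eq_of_mem_boundary F hx0 hs))⟩

end OfRelMap

variable (hg : Continuous g) (hinv : Function.Involutive g) (hx0 : g x0 = x0)

lemma toRelMap_ofRelMap (F : RelMap X {x | g x = x} x0 n) :
    toRelMap hx0 (ofRelMap F hg hinv hx0) = F :=
  RelMap.ext fun k => by
    show foldMap g F.toFun (init k) (halfParam k) = F.toFun k
    rw [foldMap, if_pos (halfParam_nonpos k), foldParam_halfParam, snoc_init]

lemma ofRelMap_toRelMap
    (p : GenLoop (Fin n) (FixLoopSp X g x0 1) (constFixLoop X g x0 hx0 1)) :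
    ofRelMap (toRelMap hx0 p) hg hinv hx0 = p :=
  GenLoop.ext _ _ fun s => Subtype.ext <| ContinuousMap.ext fun t => by
    show foldMap g (fun k => (p (init k)).1 (halfParam k)) s t = (p s).1 t
    simp only [foldMap, init_snoc, halfParam_snoc_foldParam]
    split_ifs
    · rfl
    · exact (p s).2.2 t

lemma toRelMap_homotopic
    {p q : GenLoop (Fin n) (FixLoopSp X g x0 1) (constFixLoop X g x0 hx0 1)}
    (h : GenLoop.Homotopic p q) : RelHomotopic (toRelMap hx0 p) (toRelMap hx0 q) := by
  obtain ⟨r, hr, rfl, rfl⟩ := GenLoop.homotopic_iff_exists_family.1 h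
  have hr' : Continuous fun w : I × Cube (n + 1) => ((r w.1 (init w.2)).1 : C(Cube 1, X)) :=
    (hr.comp (continuous_fst.prodMk (continuous_init.comp continuous_snd))).subtype_val
  exact relHomotopic_iff_exists_family.2
    ⟨fun τ => toRelMap hx0 (r τ), hr'.eval (continuous_halfParam.comp continuous_snd), rfl,
      rfl⟩

lemma ofRelMap_homotopic {F G : RelMap X {x | g x = x} x0 n} (h : RelHomotopic F G) :
    GenLoop.Homotopic (ofRelMap F hg hinv hx0) (ofRelMap G hg hinv hx0) := by
  obtain ⟨r, hr, rfl, rfl⟩ := relHomotopic_iff_exists_family.1 h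
  exact GenLoop.homotopic_iff_exists_family.2 ⟨fun τ => ofRelMap (r τ) hg hinv hx0,
    continuous_foldLoop hg hinv hx0 (r := fun w => r w.1)
      (hr.comp (continuous_fst.fst.prodMk continuous_snd)) continuous_snd, rfl, rfl⟩

def homotopyGroupEquivRelPi :
    HomotopyGroup (Fin n) (FixLoopSp X g x0 1) (constFixLoop X g x0 hx0 1) ≃
      RelPi X {x | g x = x} x0 n where
  toFun := Quotient.lift (fun p => Quot.mk _ (toRelMap hx0 p))
    fun _ _ h => Quot.sound (toRelMap_homotopic hx0 h)
  invFun := Quot.lift (fun F => Quotient.mk _ (ofRelMap F hg hinv hx0))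
    fun _ _ h => Quotient.sound (ofRelMap_homotopic hg hinv hx0 h)
  left_inv := Quotient.ind fun p => congrArg _ (ofRelMap_toRelMap hg hinv hx0 p)
  right_inv := Quot.ind fun F => congrArg _ (toRelMap_ofRelMap hg hinv hx0 F)

end EquivariantLoop

/-- For a `ℤ/2`-space `X` with fixed point `x0`, and `ΩX` the loop space
of paths `[-π,π] → X` based at `x0` with the involution `(g·f)(t) = g (f (-t))`, there is
for every `D ≥ 0` a bijection `π_D((ΩX)^{ℤ/2}) ≅ π_{D+1}(X, X^{ℤ/2}, x0)`. -/
theorem stmt0 (X : Type) [TopologicalSpace X] (g : X → X) (hg : Continuous g)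
    (hinv : Function.Involutive g) (x0 : X) (hx0 : g x0 = x0) (D : ℕ) :
    Nonempty (HomotopyGroup (Fin D) (FixLoopSp X g x0 1) (constFixLoop X g x0 hx0 1)
      ≃ RelPi X {x | g x = x} x0 D) :=
  ⟨EquivariantLoop.homotopyGroupEquivRelPi hg hinv hx0⟩
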